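/- arXiv:1911.11437 — 3 statements merged into one kernel-verified Lean document; each statement's English description precedes it below -/
import Mathlib

section
/- Let a be a sequence of period n₁ and b a sequence of period n₂ over GF(2) with gcd(n₁,n₂)=1, and let N = n₁n₂. Let α have order n₁ and β have order n₂ in GF(2^m), and set λ = αβ. Then for every k, the λ-DFT of the product sequence u_t = a_t b_t satisfies U_k = A_{k mod n₁} · B_{k mod n₂}, where A is the α-DFT of a over one period and B is the β-DFT of b over one period, i.e. U_k = (Σ_{t=0}^{n₁−1} a_t α^{tk}) · (Σ_{t=0}^{n₂−1} b_t β^{tk}). -/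
lemma per_mod {X : Type*} (f : ℕ → X) (n : ℕ) (hf : ∀ t, f (t + n) = f t) (t : ℕ) :
    f t = f (t % n) := by
  conv_lhs => rw [← Nat.div_add_mod t n]
  generalize t / n = q
  induction q with
  | zero => simp
  | succ q ih =>
      have : n * (q + 1) + t % n = (n * q + t % n) + n := by ring
      rw [this, hf, ih]

lemma pow_mul_mod {F : Type*} [Monoid F] (α : F) (n : ℕ) (hα : orderOf α = n)
    (t k : ℕ) : α ^ (t * k) = α ^ ((t % n) * k) := by
  conv_lhs => rw [← pow_mod_orderOf]
  conv_rhs => rw [← pow_mod_orderOf]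
  rw [hα]
  congr 1
  conv_lhs => rw [Nat.mul_mod, ← Nat.mod_mod_of_dvd t (dvd_refl n)]
  rw [← Nat.mul_mod]

/-- Product-DFT factorization: the λ = αβ DFT of the product sequence
u_t = a_t·b_t factors as the product of the α-DFT of a and the β-DFT of b. -/
theorem stmt_3 (F : Type*) [Field F] [CharP F 2] (n₁ n₂ : ℕ)
    (h₁ : 0 < n₁) (h₂ : 0 < n₂) (hcop : Nat.Coprime n₁ n₂)
    (α β : F) (hα : orderOf α = n₁) (hβ : orderOf β = n₂)
    (a b : ℕ → ZMod 2)
    (ha : ∀ t, a (t + n₁) = a t) (hb : ∀ t, b (t + n₂) = b t)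
    (k : ℕ) :
    ∑ t ∈ Finset.range (n₁ * n₂),
        (ZMod.cast (a t * b t) : F) * (α * β) ^ (t * k)
      = (∑ t ∈ Finset.range n₁, (ZMod.cast (a t) : F) * α ^ (t * k)) *
        (∑ t ∈ Finset.range n₂, (ZMod.cast (b t) : F) * β ^ (t * k)) := by
  rw [Finset.sum_mul_sum, ← Finset.sum_product']
  refine Finset.sum_nbij' (fun t => (t % n₁, t % n₂))
    (fun p => (Nat.chineseRemainder hcop p.1 p.2).val % (n₁ * n₂)) ?_ ?_ ?_ ?_ ?_
  · intro t ht
    simp only [Finset.mem_product, Finset.mem_range]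
    exact ⟨Nat.mod_lt _ h₁, Nat.mod_lt _ h₂⟩
  · intro p hp
    exact Finset.mem_range.mpr (Nat.mod_lt _ (Nat.mul_pos h₁ h₂))
  · intro t ht
    simp only [Finset.mem_range] at ht
    -- left inverse: crt (t%n₁, t%n₂) % N = t
    have hcrt := (Nat.chineseRemainder hcop (t % n₁) (t % n₂)).prop
    have h1 : ((Nat.chineseRemainder hcop (t % n₁) (t % n₂)).val : ℕ) ≡ t [MOD n₁ * n₂] := by
      refine (Nat.modEq_and_modEq_iff_modEq_mul hcop).mp ⟨?_, ?_⟩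
      · exact hcrt.1.trans (Nat.mod_modEq t n₁)
      · exact hcrt.2.trans (Nat.mod_modEq t n₂)
    calc (Nat.chineseRemainder hcop (t % n₁) (t % n₂)).val % (n₁ * n₂)
        = t % (n₁ * n₂) := h1
      _ = t := Nat.mod_eq_of_lt ht
  · intro p hp
    simp only [Finset.mem_product, Finset.mem_range] at hp
    have hcrt := (Nat.chineseRemainder hcop p.1 p.2).prop
    have e1 : (Nat.chineseRemainder hcop p.1 p.2).val % (n₁ * n₂) % n₁ = p.1 := by
      rw [Nat.mod_mod_of_dvd _ ⟨n₂, rfl⟩]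
      calc (Nat.chineseRemainder hcop p.1 p.2).val % n₁ = p.1 % n₁ := hcrt.1
        _ = p.1 := Nat.mod_eq_of_lt hp.1
    have e2 : (Nat.chineseRemainder hcop p.1 p.2).val % (n₁ * n₂) % n₂ = p.2 := by
      rw [Nat.mod_mod_of_dvd _ ⟨n₁, mul_comm _ _⟩]
      calc (Nat.chineseRemainder hcop p.1 p.2).val % n₂ = p.2 % n₂ := hcrt.2
        _ = p.2 := Nat.mod_eq_of_lt hp.2
    exact Prod.ext e1 e2
  · intro t ht
    simp only
    rw [per_mod a n₁ ha t, per_mod b n₂ hb t, mul_pow,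
      pow_mul_mod α n₁ hα t k, pow_mul_mod β n₂ hβ t k, ZMod.cast_mul']
    ring
end

section
/- Let a : ℕ → GF(2) have period n₁, b have period n₂, c have period n₃, with n₁, n₂, n₃ pairwise coprime, and let α, β, γ in a field F of characteristic 2 have orders n₁, n₂, n₃ respectively. Then the DFT (with respect to λ = αβγ, of order N = n₁n₂n₃) of the product sequence u_t = a_t b_t c_t factors as U_k = A_{k mod n₁} B_{k mod n₂} C_{k mod n₃}. -/
/-- Three-factor product-DFT factorization: with pairwise coprime orders
n₁, n₂, n₃, the λ = αβγ DFT of u_t = a_t b_t c_t factors as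
U_k = A_{k mod n₁} B_{k mod n₂} C_{k mod n₃}. -/
theorem stmt_9 (F : Type*) [Field F] [CharP F 2] (n₁ n₂ n₃ : ℕ)
    (h₁ : 0 < n₁) (h₂ : 0 < n₂) (h₃ : 0 < n₃)
    (h₁₂ : Nat.Coprime n₁ n₂) (h₁₃ : Nat.Coprime n₁ n₃) (h₂₃ : Nat.Coprime n₂ n₃)
    (α β γ : F) (hα : orderOf α = n₁) (hβ : orderOf β = n₂) (hγ : orderOf γ = n₃)
    (a b c : ℕ → ZMod 2)
    (ha : ∀ t, a (t + n₁) = a t) (hb : ∀ t, b (t + n₂) = b t)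
    (hc : ∀ t, c (t + n₃) = c t)
    (k : ℕ) :
    ∑ t ∈ Finset.range (n₁ * n₂ * n₃),
        (ZMod.cast (a t * b t * c t) : F) * (α * β * γ) ^ (t * k)
      = (∑ t ∈ Finset.range n₁, (ZMod.cast (a t) : F) * α ^ (t * k)) *
        (∑ t ∈ Finset.range n₂, (ZMod.cast (b t) : F) * β ^ (t * k)) *
        (∑ t ∈ Finset.range n₃, (ZMod.cast (c t) : F) * γ ^ (t * k)) := by
  have h1_23 : Nat.Coprime n₁ (n₂ * n₃) := Nat.Coprime.mul_right h₁₂ h₁₃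
  have hN : 0 < n₁ * n₂ * n₃ := by positivity
  -- RHS as sum over triple product
  have hrhs :
      (∑ t ∈ Finset.range n₁, (ZMod.cast (a t) : F) * α ^ (t * k)) *
        (∑ t ∈ Finset.range n₂, (ZMod.cast (b t) : F) * β ^ (t * k)) *
        (∑ t ∈ Finset.range n₃, (ZMod.cast (c t) : F) * γ ^ (t * k))
      = ∑ p ∈ (Finset.range n₁ ×ˢ Finset.range n₂) ×ˢ Finset.range n₃,
          ((ZMod.cast (a p.1.1) : F) * α ^ (p.1.1 * k)) *
          ((ZMod.cast (b p.1.2) : F) * β ^ (p.1.2 * k)) *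
          ((ZMod.cast (c p.2) : F) * γ ^ (p.2 * k)) := by
    simp only [Finset.sum_product, Finset.sum_mul, Finset.mul_sum, mul_assoc]
    conv_lhs => rw [Finset.sum_comm]
    conv_lhs => enter [2, x]; rw [Finset.sum_comm]
    conv_lhs => rw [Finset.sum_comm]
  rw [hrhs]
  refine Finset.sum_nbij' (i := fun t => ((t % n₁, t % n₂), t % n₃))
    (j := fun p => (Nat.chineseRemainder h1_23 p.1.1
        ((Nat.chineseRemainder h₂₃ p.1.2 p.2 : ℕ)) : ℕ) % (n₁ * n₂ * n₃))
    ?_ ?_ ?_ ?_ ?_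
  · intro t ht
    simp only [Finset.mem_product, Finset.mem_range]
    exact ⟨⟨Nat.mod_lt _ h₁, Nat.mod_lt _ h₂⟩, Nat.mod_lt _ h₃⟩
  · intro p hp
    exact Finset.mem_range.mpr (Nat.mod_lt _ hN)
  · intro t ht
    simp only [Finset.mem_range] at ht
    set r₂₃ := Nat.chineseRemainder h₂₃ (t % n₂) (t % n₃)
    set r := Nat.chineseRemainder h1_23 (t % n₁) (r₂₃ : ℕ)
    have hr : (r : ℕ) ≡ t [MOD n₁ * n₂ * n₃] := by
      rw [mul_assoc, ← Nat.modEq_and_modEq_iff_modEq_mul h1_23]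
      constructor
      · exact r.2.1.trans (Nat.mod_modEq t n₁)
      · rw [← Nat.modEq_and_modEq_iff_modEq_mul h₂₃]
        have h2 : (r : ℕ) ≡ (r₂₃ : ℕ) [MOD n₂] :=
          (Nat.ModEq.of_mul_right n₃ r.2.2)
        have h3 : (r : ℕ) ≡ (r₂₃ : ℕ) [MOD n₃] :=
          (Nat.ModEq.of_mul_left n₂ r.2.2)
        exact ⟨h2.trans (r₂₃.2.1.trans (Nat.mod_modEq t n₂)),
               h3.trans (r₂₃.2.2.trans (Nat.mod_modEq t n₃))⟩
    have := ((Nat.mod_modEq (r : ℕ) (n₁ * n₂ * n₃)).trans hr)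
    exact this.eq_of_lt_of_lt (Nat.mod_lt _ hN) ht
  · intro p hp
    simp only [Finset.mem_product, Finset.mem_range] at hp
    obtain ⟨⟨hp1, hp2⟩, hp3⟩ := hp
    set r₂₃ := Nat.chineseRemainder h₂₃ p.1.2 p.2
    set r := Nat.chineseRemainder h1_23 p.1.1 (r₂₃ : ℕ)
    have hdvd1 : n₁ ∣ n₁ * n₂ * n₃ := ⟨n₂ * n₃, by ring⟩
    have hdvd2 : n₂ ∣ n₁ * n₂ * n₃ := ⟨n₁ * n₃, by ring⟩
    have hdvd3 : n₃ ∣ n₁ * n₂ * n₃ := ⟨n₁ * n₂, by ring⟩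
    have e1 : (r : ℕ) % (n₁ * n₂ * n₃) % n₁ = p.1.1 := by
      have : (r : ℕ) % (n₁ * n₂ * n₃) ≡ p.1.1 [MOD n₁] :=
        ((Nat.mod_modEq (r : ℕ) _).of_dvd hdvd1).trans r.2.1
      calc (r : ℕ) % (n₁ * n₂ * n₃) % n₁ = p.1.1 % n₁ := this
        _ = p.1.1 := Nat.mod_eq_of_lt hp1
    have e2 : (r : ℕ) % (n₁ * n₂ * n₃) % n₂ = p.1.2 := by
      have : (r : ℕ) % (n₁ * n₂ * n₃) ≡ p.1.2 [MOD n₂] :=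
        ((Nat.mod_modEq (r : ℕ) _).of_dvd hdvd2).trans
          ((Nat.ModEq.of_mul_right n₃ r.2.2).trans r₂₃.2.1)
      calc (r : ℕ) % (n₁ * n₂ * n₃) % n₂ = p.1.2 % n₂ := this
        _ = p.1.2 := Nat.mod_eq_of_lt hp2
    have e3 : (r : ℕ) % (n₁ * n₂ * n₃) % n₃ = p.2 := by
      have : (r : ℕ) % (n₁ * n₂ * n₃) ≡ p.2 [MOD n₃] :=
        ((Nat.mod_modEq (r : ℕ) _).of_dvd hdvd3).trans
          ((Nat.ModEq.of_mul_left n₂ r.2.2).trans r₂₃.2.2)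
      calc (r : ℕ) % (n₁ * n₂ * n₃) % n₃ = p.2 % n₃ := this
        _ = p.2 := Nat.mod_eq_of_lt hp3
    exact Prod.ext (Prod.ext e1 e2) e3
  · intro t ht
    have hper_a : Function.Periodic a n₁ := ha
    have hper_b : Function.Periodic b n₂ := hb
    have hper_c : Function.Periodic c n₃ := hc
    have hcast : ∀ x y : ZMod 2, (ZMod.cast (x * y) : F) = ZMod.cast x * ZMod.cast y := by
      intro x y
      have := map_mul (ZMod.castHom (dvd_refl 2) F) x y
      simpa using this
    have hpow : ∀ (x : F) (n : ℕ), orderOf x = n → x ^ (t % n * k) = x ^ (t * k) := by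
      intro x n hx
      have hxn : x ^ n = 1 := hx ▸ pow_orderOf_eq_one x
      conv_rhs => rw [← Nat.mod_add_div t n]
      rw [add_mul, pow_add, mul_assoc n, pow_mul x n, hxn, one_pow, mul_one]
    rw [hper_a.map_mod_nat, hper_b.map_mod_nat, hper_c.map_mod_nat,
      hpow α n₁ hα, hpow β n₂ hβ, hpow γ n₃ hγ, hcast, hcast, mul_pow, mul_pow]
    ring
end

section
/- Blahut-type bound: let s : ℕ → F be a sequence of period N over a field F containing λ of order N, with N odd and char F = 2. If the DFT S of s has exactly L nonzero components, then the linear complexity of s (the degree of its minimal polynomial as an LFSR sequence) equals L. -/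
open scoped Classical
open Finset Polynomial

/-- Blahut's theorem: the linear complexity of a period-N sequence equals the
number of nonzero components of its DFT. -/
theorem stmt_12 (F : Type*) [Field F] [CharP F 2] (N : ℕ) (hN : Odd N)
    (hNpos : 0 < N) (lam : F) (hord : orderOf lam = N)
    (s : ℕ → F) (hper : ∀ t, s (t + N) = s t)
    (S : ℕ → F) (hS : ∀ k, S k = ∑ t ∈ Finset.range N, s t * lam ^ (t * k))
    (L : ℕ) (hL : L = ((Finset.range N).filter fun k => S k ≠ 0).card) :
    IsLeast {d : ℕ | ∃ c : Fin d → F,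
        ∀ t, s (t + d) = ∑ i : Fin d, c i * s (t + d - ((i : ℕ) + 1))} L := by
  classical
  have h2F : (2 : F) = 0 := by exact_mod_cast CharP.cast_eq_zero F 2
  have hadd : ∀ a : F, a + a = 0 := fun a => by rw [← two_mul, h2F, zero_mul]
  have hneg : ∀ a : F, -a = a := fun a => neg_eq_of_add_eq_zero_left (hadd a)
  have hNF : (N : F) = 1 := by
    obtain ⟨m, hm⟩ := hN
    subst hm
    push_cast
    rw [h2F]
    ring
  have hlam1 : lam ^ N = 1 := by rw [← hord]; exact pow_orderOf_eq_one lam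
  have hone : ∀ m : ℕ, lam ^ m = 1 ↔ N ∣ m := by
    intro m
    rw [← hord]
    exact orderOf_dvd_iff_pow_eq_one.symm
  set μ : F := lam ^ (N - 1) with hμ
  have hμlam : lam * μ = 1 := by
    rw [hμ, ← pow_succ', Nat.sub_add_cancel hNpos]
    exact hlam1
  have hμne : μ ≠ 0 := right_ne_zero_of_mul_eq_one hμlam
  have hdvd : ∀ a b : ℕ, N ∣ a + (N - 1) * b ↔ a % N = b % N := by
    intro a b
    have h1 : (N - 1) * b = N * b - b := by rw [Nat.sub_mul, one_mul]
    have h2 : b ≤ N * b := Nat.le_mul_of_pos_left b hNpos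
    have key : a + (N - 1) * b + b = a + N * b := by omega
    constructor
    · intro h
      have hm : (a + (N - 1) * b + b) % N = (0 + b) % N :=
        Nat.ModEq.add_right b ((Nat.modEq_zero_iff_dvd).mpr h)
      rw [key, zero_add] at hm
      rw [Nat.add_mul_mod_self_left] at hm
      exact hm
    · intro h
      have hm : (a + (N - 1) * b + b) % N = (0 + b) % N := by
        rw [key, zero_add, Nat.add_mul_mod_self_left]
        exact h
      exact (Nat.modEq_zero_iff_dvd).mp (Nat.ModEq.add_right_cancel' b hm)
  have hcond : ∀ a b : ℕ, lam ^ a * μ ^ b = 1 ↔ a % N = b % N := by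
    intro a b
    rw [hμ, ← pow_mul, ← pow_add, hone]
    exact hdvd a b
  have hcop : Nat.Coprime N (N - 1) := by
    exact (Nat.coprime_self_sub_right hNpos).mpr (Nat.coprime_one_right N)
  have hμone : ∀ m : ℕ, μ ^ m = 1 ↔ N ∣ m := by
    intro m
    rw [hμ, ← pow_mul, hone]
    constructor
    · intro h
      exact hcop.dvd_of_dvd_mul_left h
    · intro h
      exact h.mul_left _
  have hμN : μ ^ N = 1 := (hμone N).mpr dvd_rfl
  have hgeom : ∀ x : F, x ^ N = 1 → x ≠ 1 → ∑ t ∈ range N, x ^ t = 0 := by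
    intro x hx hx1
    have h0 : (∑ t ∈ range N, x ^ t) * (x - 1) = 0 := by
      rw [geom_sum_mul, hx, sub_self]
    rcases mul_eq_zero.mp h0 with h | h
    · exact h
    · exact absurd (sub_eq_zero.mp h) hx1
  have horth : ∀ a b : ℕ, (∑ t ∈ range N, (lam ^ a * μ ^ b) ^ t)
      = if a % N = b % N then 1 else 0 := by
    intro a b
    by_cases h : a % N = b % N
    · rw [if_pos h]
      have h1 : lam ^ a * μ ^ b = 1 := (hcond a b).mpr h
      rw [h1]
      simp [hNF]
    · rw [if_neg h]
      apply hgeom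
      · rw [mul_pow, ← pow_mul lam a N, ← pow_mul μ b N, mul_comm a N, mul_comm b N,
          pow_mul lam N a, pow_mul μ N b, hlam1, hμN, one_pow, one_pow, one_mul]
      · intro heq
        exact h ((hcond a b).mp heq)
  have hmod : ∀ t, s t = s (t % N) := by
    intro t
    conv_lhs => rw [← Nat.mod_add_div t N]
    generalize t / N = q
    induction q with
    | zero => simp
    | succ n ih =>
      have e : t % N + N * (n + 1) = (t % N + N * n) + N := by ring
      rw [e, hper, ih]
  have hrep : ∀ t, s t = ∑ k ∈ range N, S k * μ ^ (k * t) := by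
    intro t
    symm
    calc ∑ k ∈ range N, S k * μ ^ (k * t)
        = ∑ k ∈ range N, ∑ u ∈ range N, s u * (lam ^ u * μ ^ t) ^ k := by
          apply Finset.sum_congr rfl; intro k _
          rw [hS, Finset.sum_mul]
          apply Finset.sum_congr rfl; intro u _
          rw [mul_pow, ← pow_mul lam u k, ← pow_mul μ t k, mul_comm t k]
          ring
      _ = ∑ u ∈ range N, s u * ∑ k ∈ range N, (lam ^ u * μ ^ t) ^ k := by
          rw [Finset.sum_comm]
          apply Finset.sum_congr rfl; intro u _
          rw [Finset.mul_sum]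
      _ = ∑ u ∈ range N, s u * (if u % N = t % N then 1 else 0) := by
          apply Finset.sum_congr rfl; intro u _
          rw [horth]
      _ = ∑ u ∈ range N, s u * (if u = t % N then 1 else 0) := by
          apply Finset.sum_congr rfl; intro u hu
          rw [Nat.mod_eq_of_lt (Finset.mem_range.mp hu)]
      _ = s (t % N) := by
          simp only [mul_ite, mul_one, mul_zero]
          rw [Finset.sum_ite_eq' (range N) (t % N) s,
            if_pos (Finset.mem_range.mpr (Nat.mod_lt t hNpos))]
      _ = s t := (hmod t).symm
  set A : Finset ℕ := (Finset.range N).filter (fun k => S k ≠ 0) with hA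
  have hLA : L = A.card := hL
  have hrepA : ∀ t, s t = ∑ k ∈ A, S k * μ ^ (k * t) := by
    intro t
    rw [hrep t]
    symm
    apply Finset.sum_filter_of_ne
    intro k _ hk hSk
    exact hk (by rw [hSk, zero_mul])
  have hinj' : ∀ k1 k2, k1 < N → k2 < N → μ ^ k1 = μ ^ k2 → k1 = k2 := by
    have base : ∀ k1 k2, k1 ≤ k2 → k2 < N → μ ^ k1 = μ ^ k2 → k1 = k2 := by
      intro k1 k2 hle h2 he
      have hsplit : μ ^ k2 = μ ^ k1 * μ ^ (k2 - k1) := by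
        rw [← pow_add]
        congr 1
        omega
      rw [hsplit] at he
      have hne : μ ^ k1 ≠ 0 := pow_ne_zero _ hμne
      have h1 : μ ^ (k2 - k1) = 1 :=
        (mul_left_cancel₀ hne (by rw [← he, mul_one])).symm
      have h0 : k2 - k1 = 0 := Nat.eq_zero_of_dvd_of_lt ((hμone _).mp h1) (by omega)
      omega
    intro k1 k2 h1 h2 he
    rcases le_total k1 k2 with h | h
    · exact base _ _ h h2 he
    · exact (base _ _ h h1 he.symm).symm
  have hmemN : ∀ k ∈ A, k < N := by
    intro k hk
    exact Finset.mem_range.mp (Finset.mem_filter.mp hk).1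
  -- the minimal polynomial
  set P : Polynomial F := ∏ k ∈ A, (X - C (μ ^ k)) with hP
  have hmonic : P.Monic := monic_prod_of_monic _ _ (fun k _ => monic_X_sub_C _)
  have hPdeg : P.natDegree = L := by
    rw [hP, Polynomial.natDegree_prod _ _ (fun k _ => Polynomial.X_sub_C_ne_zero (μ ^ k))]
    simp only [Polynomial.natDegree_X_sub_C]
    rw [Finset.sum_const, smul_eq_mul, mul_one]
    exact hLA.symm
  have hroot : ∀ k ∈ A, P.eval (μ ^ k) = 0 := by
    intro k hk
    rw [hP, Polynomial.eval_prod]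
    apply Finset.prod_eq_zero hk
    simp
  have hlead : P.coeff L = 1 := by
    rw [← hPdeg]
    exact hmonic.coeff_natDegree
  have hkey : ∀ x : F, P.eval x = 0 → x ^ L = ∑ j ∈ range L, P.coeff j * x ^ j := by
    intro x hx
    have he := Polynomial.eval_eq_sum_range (p := P) x
    rw [hPdeg, Finset.sum_range_succ, hlead, one_mul, hx] at he
    have h3 : x ^ L = -(∑ j ∈ range L, P.coeff j * x ^ j) :=
      eq_neg_of_add_eq_zero_right he.symm
    rw [h3, hneg]
  constructor
  · -- membership : L admits a recurrence
    refine ⟨fun i => P.coeff (L - 1 - (i : ℕ)), ?_⟩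
    intro t
    calc s (t + L) = ∑ k ∈ A, S k * μ ^ (k * (t + L)) := hrepA _
      _ = ∑ k ∈ A, ∑ i : Fin L,
            P.coeff (L - 1 - (i : ℕ)) * (S k * μ ^ (k * t) * (μ ^ k) ^ (L - 1 - (i : ℕ))) := by
          apply Finset.sum_congr rfl; intro k hk
          calc S k * μ ^ (k * (t + L))
              = S k * μ ^ (k * t) * (μ ^ k) ^ L := by
                rw [Nat.mul_add, pow_add, pow_mul]
                ring
            _ = S k * μ ^ (k * t) * ∑ j ∈ range L, P.coeff j * (μ ^ k) ^ j := by
                rw [hkey (μ ^ k) (hroot k hk)]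
            _ = S k * μ ^ (k * t) * ∑ i ∈ range L, P.coeff (L - 1 - i) * (μ ^ k) ^ (L - 1 - i) := by
                congr 1
                exact (Finset.sum_range_reflect (fun j => P.coeff j * (μ ^ k) ^ j) L).symm
            _ = ∑ i : Fin L,
                P.coeff (L - 1 - (i : ℕ)) * (S k * μ ^ (k * t) * (μ ^ k) ^ (L - 1 - (i : ℕ))) := by
                rw [Fin.sum_univ_eq_sum_range
                  (fun i => P.coeff (L - 1 - i) * (S k * μ ^ (k * t) * (μ ^ k) ^ (L - 1 - i))) L,
                  Finset.mul_sum]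
                apply Finset.sum_congr rfl; intro i _
                ring
      _ = ∑ i : Fin L, ∑ k ∈ A,
            P.coeff (L - 1 - (i : ℕ)) * (S k * μ ^ (k * t) * (μ ^ k) ^ (L - 1 - (i : ℕ))) :=
          Finset.sum_comm
      _ = ∑ i : Fin L, P.coeff (L - 1 - (i : ℕ)) * s (t + L - ((i : ℕ) + 1)) := by
          apply Finset.sum_congr rfl; intro i _
          have hi := i.isLt
          rw [show t + L - ((i : ℕ) + 1) = t + (L - 1 - (i : ℕ)) from by omega, hrepA,
            Finset.mul_sum]
          apply Finset.sum_congr rfl; intro k _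
          rw [Nat.mul_add, pow_add, pow_mul]
          ring
  · -- lower bound
    rintro d ⟨c, hc⟩
    set Q : Polynomial F := X ^ d + ∑ i : Fin d, C (c i) * X ^ (d - ((i : ℕ) + 1)) with hQ
    have hQeval : ∀ x : F, Q.eval x = x ^ d + ∑ i : Fin d, c i * x ^ (d - ((i : ℕ) + 1)) := by
      intro x
      rw [hQ]
      simp [Polynomial.eval_finset_sum]
    have hQcoeff : Q.coeff d = 1 := by
      rw [hQ, Polynomial.coeff_add, Polynomial.coeff_X_pow, if_pos rfl,
        Polynomial.finset_sum_coeff]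
      have hz : ∀ i : Fin d, (C (c i) * X ^ (d - ((i : ℕ) + 1))).coeff d = 0 := by
        intro i
        have hi := i.isLt
        rw [Polynomial.coeff_C_mul, Polynomial.coeff_X_pow, if_neg (by omega), mul_zero]
      rw [Finset.sum_eq_zero (fun i _ => hz i), add_zero]
    have hQne : Q ≠ 0 := by
      intro h
      rw [h, Polynomial.coeff_zero] at hQcoeff
      exact one_ne_zero hQcoeff.symm
    have hQle : Q.natDegree ≤ d := by
      rw [hQ]
      apply le_trans (Polynomial.natDegree_add_le _ _)
      rw [max_le_iff]
      constructor
      · exact le_of_eq (Polynomial.natDegree_X_pow d)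
      · apply Polynomial.natDegree_sum_le_of_forall_le
        intro i _
        apply le_trans (Polynomial.natDegree_C_mul_le _ _)
        rw [Polynomial.natDegree_X_pow]
        omega
    have hQdeg : Q.natDegree = d :=
      le_antisymm hQle (Polynomial.le_natDegree_of_ne_zero (by rw [hQcoeff]; exact one_ne_zero))
    have hzero : ∀ t, ∑ k ∈ A, S k * Q.eval (μ ^ k) * μ ^ (k * t) = 0 := by
      intro t
      have hexp : ∀ k ∈ A, S k * Q.eval (μ ^ k) * μ ^ (k * t)
          = S k * μ ^ (k * (t + d))
            + ∑ i : Fin d, c i * (S k * μ ^ (k * (t + (d - ((i : ℕ) + 1))))) := by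
        intro k _
        have e1 : ∀ m : ℕ, μ ^ (k * (t + m)) = μ ^ (k * t) * (μ ^ k) ^ m := by
          intro m
          rw [Nat.mul_add, pow_add, pow_mul μ k m]
        simp only [e1]
        rw [hQeval, mul_add, add_mul]
        congr 1
        · ring
        · rw [Finset.mul_sum, Finset.sum_mul]
          apply Finset.sum_congr rfl; intro i _
          ring
      calc ∑ k ∈ A, S k * Q.eval (μ ^ k) * μ ^ (k * t)
          = ∑ k ∈ A, (S k * μ ^ (k * (t + d))
            + ∑ i : Fin d, c i * (S k * μ ^ (k * (t + (d - ((i : ℕ) + 1)))))) :=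
            Finset.sum_congr rfl hexp
        _ = (∑ k ∈ A, S k * μ ^ (k * (t + d)))
            + ∑ k ∈ A, ∑ i : Fin d, c i * (S k * μ ^ (k * (t + (d - ((i : ℕ) + 1))))) :=
            Finset.sum_add_distrib
        _ = s (t + d) + ∑ i : Fin d, c i * s (t + d - ((i : ℕ) + 1)) := by
            rw [← hrepA (t + d), Finset.sum_comm]
            congr 1
            apply Finset.sum_congr rfl
            intro i _
            have hi := i.isLt
            rw [show t + (d - ((i : ℕ) + 1)) = t + d - ((i : ℕ) + 1) from by omega,
              ← Finset.mul_sum, ← hrepA]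
        _ = 0 := by
            rw [← hc t]
            exact hadd _
    have hQroot : ∀ j ∈ A, Q.eval (μ ^ j) = 0 := by
      intro j hj
      have hjN : j < N := hmemN j hj
      have h0 : ∑ t ∈ range N, lam ^ (j * t) * ∑ k ∈ A, S k * Q.eval (μ ^ k) * μ ^ (k * t) = 0 := by
        simp only [hzero, mul_zero, Finset.sum_const_zero]
      have h1 : ∑ k ∈ A, (S k * Q.eval (μ ^ k)) * ∑ t ∈ range N, (lam ^ j * μ ^ k) ^ t = 0 := by
        calc ∑ k ∈ A, (S k * Q.eval (μ ^ k)) * ∑ t ∈ range N, (lam ^ j * μ ^ k) ^ t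
            = ∑ k ∈ A, ∑ t ∈ range N, lam ^ (j * t) * (S k * Q.eval (μ ^ k) * μ ^ (k * t)) := by
              apply Finset.sum_congr rfl; intro k _
              rw [Finset.mul_sum]
              apply Finset.sum_congr rfl; intro t _
              rw [mul_pow, ← pow_mul lam j t, ← pow_mul μ k t]
              ring
          _ = ∑ t ∈ range N, lam ^ (j * t) * ∑ k ∈ A, S k * Q.eval (μ ^ k) * μ ^ (k * t) := by
              rw [Finset.sum_comm]
              apply Finset.sum_congr rfl; intro t _
              rw [Finset.mul_sum]
          _ = 0 := h0
      have h2 : ∀ k ∈ A, (S k * Q.eval (μ ^ k)) * ∑ t ∈ range N, (lam ^ j * μ ^ k) ^ t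
          = if k = j then S k * Q.eval (μ ^ k) else 0 := by
        intro k hk
        have hkN : k < N := hmemN k hk
        rw [horth j k, Nat.mod_eq_of_lt hjN, Nat.mod_eq_of_lt hkN]
        by_cases h : k = j
        · subst h
          simp
        · rw [if_neg (fun hh => h hh.symm), if_neg h, mul_zero]
      rw [Finset.sum_congr rfl h2, Finset.sum_ite_eq' A j
        (fun k => S k * Q.eval (μ ^ k)), if_pos hj] at h1
      rcases mul_eq_zero.mp h1 with h | h
      · exact absurd h (Finset.mem_filter.mp hj).2
      · exact h
    have hsub : A.image (fun k => μ ^ k) ⊆ Q.roots.toFinset := by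
      intro x hx
      obtain ⟨k, hk, rfl⟩ := Finset.mem_image.mp hx
      rw [Multiset.mem_toFinset, Polynomial.mem_roots hQne]
      exact hQroot k hk
    calc L = A.card := hLA
      _ = (A.image (fun k => μ ^ k)).card := by
          rw [Finset.card_image_of_injOn]
          intro k1 h1 k2 h2 he
          exact hinj' k1 k2 (hmemN k1 h1) (hmemN k2 h2) he
      _ ≤ Q.roots.toFinset.card := Finset.card_le_card hsub
      _ ≤ Multiset.card Q.roots := Multiset.toFinset_card_le _
      _ ≤ Q.natDegree := Polynomial.card_roots' Q
      _ = d := hQdeg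
end
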